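/- Fix a nonempty set U. For every predicate type π and all f, g ∈ ⟦π⟧*_U: f ≼_π g (in the precision order) if and only if τ_π(f) ≼ τ_π(g) in the precision order on (⟦π⟧_U)^c, i.e. [τ_π(f)]_1 ≤ [τ_π(g)]_1 and [τ_π(g)]_2 ≤ [τ_π(f)]_2. -/

import Mathlib

/-- The three-valued truth domain: false, undef, true. -/
inductive Three : Type where
  | fls : Three
  | undef : Three
  | tru : Three
deriving DecidableEq

def Three.toNat : Three → ℕ
  | .fls => 0
  | .undef => 1
  | .tru => 2

/-- Truth order on `Three`, induced by `fls < undef < tru`. -/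
def Three.le (a b : Three) : Prop := a.toNat ≤ b.toNat

/-- Precision order on `Three`, induced by `undef ≺ fls` and `undef ≺ tru`. -/
def Three.prec (a b : Three) : Prop := a = .undef ∨ a = b

/-- Predicate types `π ::= o | ρ → π` where the argument `ρ` is either the
individual type `ι` (constructor `arrI`) or a predicate type (constructor `arrP`). -/
inductive PTy : Type where
  | o : PTy
  | arrI : PTy → PTy
  | arrP : PTy → PTy → PTy

/-- Argument types `ρ ::= ι | π`. -/
inductive ATy : Type where
  | iota : ATy
  | pred : PTy → ATy

/-- Two-valued semantics of predicate types over base set `U`. -/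
def sem2 (U : Type) : PTy → Type
  | .o => Bool
  | .arrI π => U → sem2 U π
  | .arrP ρ π => sem2 U ρ → sem2 U π

/-- Three-valued semantics: functions take *two-valued* arguments. -/
def sem3 (U : Type) : PTy → Type
  | .o => Three
  | .arrI π => U → sem3 U π
  | .arrP ρ π => sem2 U ρ → sem3 U π

/-- Two-valued semantics of argument types. -/
def semA (U : Type) : ATy → Type
  | .iota => U
  | .pred π => sem2 U π

/-- Pointwise (truth) order on the two-valued domains. -/
def le2 (U : Type) : (π : PTy) → sem2 U π → sem2 U π → Prop
  | .o, a, b => @LE.le Bool _ a b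
  | .arrI π, f, g => ∀ d : U, le2 U π (f d) (g d)
  | .arrP ρ π, f, g => ∀ d : sem2 U ρ, le2 U π (f d) (g d)

/-- Pointwise truth order on the three-valued domains. -/
def le3 (U : Type) : (π : PTy) → sem3 U π → sem3 U π → Prop
  | .o, a, b => Three.le a b
  | .arrI π, f, g => ∀ d : U, le3 U π (f d) (g d)
  | .arrP ρ π, f, g => ∀ d : sem2 U ρ, le3 U π (f d) (g d)

/-- Pointwise precision order on the three-valued domains. -/
def prec3 (U : Type) : (π : PTy) → sem3 U π → sem3 U π → Prop
  | .o, a, b => Three.prec a b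
  | .arrI π, f, g => ∀ d : U, prec3 U π (f d) (g d)
  | .arrP ρ π, f, g => ∀ d : sem2 U ρ, prec3 U π (f d) (g d)

/-- The everywhere-undefined element of the three-valued domain. -/
def undef3 (U : Type) : (π : PTy) → sem3 U π
  | .o => Three.undef
  | .arrI π => fun _ => undef3 U π
  | .arrP _ρ π => fun _ => undef3 U π

def tauo : Three → Bool × Bool
  | .fls => (false, false)
  | .undef => (false, true)
  | .tru => (true, true)

/-- The map `τ_π` from the three-valued domain to pairs of two-valued elements. -/
def tau (U : Type) : (π : PTy) → sem3 U π → sem2 U π × sem2 U π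
  | .o, a => tauo a
  | .arrI π, f => (fun d => (tau U π (f d)).1, fun d => (tau U π (f d)).2)
  | .arrP _ρ π, f => (fun d => (tau U π (f d)).1, fun d => (tau U π (f d)).2)

/-- The map `τ⁻¹_π` from pairs of two-valued elements to the three-valued domain
(on non-consistent pairs at base type its value is irrelevant junk). -/
def tauInv (U : Type) : (π : PTy) → sem2 U π → sem2 U π → sem3 U π
  | .o, a, b => cond a (cond b Three.tru Three.undef) (cond b Three.undef Three.fls)
  | .arrI π, f, g => fun d => tauInv U π (f d) (g d)
  | .arrP _ρ π, f, g => fun d => tauInv U π (f d) (g d)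

/-- The embedding `ε_π` of the two-valued domain into the three-valued one. -/
def eps (U : Type) : (π : PTy) → sem2 U π → sem3 U π
  | .o, b => cond b Three.tru Three.fls
  | .arrI π, f => fun d => eps U π (f d)
  | .arrP _ρ π, f => fun d => eps U π (f d)

/-- The order of a predicate type: `order(o) = 1`,
`order(ρ→π) = max (order ρ + 1) (order π)` with `order ι = 0`. -/
def orderP : PTy → ℕ
  | .o => 1
  | .arrI π => max 1 (orderP π)
  | .arrP ρ π => max (orderP ρ + 1) (orderP π)

/-- The order of an argument type. -/
def orderA : ATy → ℕ
  | .iota => 0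
  | .pred π => orderP π

/-- Iterated exponential: `expk 0 x = x`, `expk (k+1) x = 2 ^ expk k x`. -/
def expk : ℕ → ℕ → ℕ
  | 0, x => x
  | k+1, x => 2 ^ expk k x

/-- The product of the cardinalities of the argument domains of a predicate type. -/
noncomputable def argProd (U : Type) : PTy → ℕ
  | .o => 1
  | .arrI π => Nat.card U * argProd U π
  | .arrP ρ π => Nat.card (sem2 U ρ) * argProd U π

/-- `s` is a least upper bound of `S` with respect to the relation `R`. -/
def IsLubR {α : Type _} (R : α → α → Prop) (S : Set α) (s : α) : Prop :=
  (∀ a ∈ S, R a s) ∧ ∀ b, (∀ a ∈ S, R a b) → R s b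

/-- `s` is a greatest lower bound of `S` with respect to the relation `R`. -/
def IsGlbR {α : Type _} (R : α → α → Prop) (S : Set α) (s : α) : Prop :=
  (∀ a ∈ S, R s a) ∧ ∀ b, (∀ a ∈ S, R b a) → R b s

/-- The set of consistent pairs `L^c = {(x,y) ∈ L × L | x ≤ y}`. -/
def Lc (L : Type _) [CompleteLattice L] : Type _ := {p : L × L // p.1 ≤ p.2}

/-- The precision order on consistent pairs: `(x,y) ≼ (x',y')` iff `x ≤ x'` and `y' ≤ y`. -/
def precPair {L : Type _} [CompleteLattice L] (a b : Lc L) : Prop :=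
  a.1.1 ≤ b.1.1 ∧ b.1.2 ≤ a.1.2

theorem Three.prec_iff_tauo (a b : Three) :
    a.prec b ↔ (tauo a).1 ≤ (tauo b).1 ∧ (tauo b).2 ≤ (tauo a).2 := by
  cases a <;> cases b <;> simp [Three.prec, tauo]

theorem stmt8_general (U : Type) (π : PTy) (f g : sem3 U π) :
    prec3 U π f g ↔
      (le2 U π (tau U π f).1 (tau U π g).1 ∧ le2 U π (tau U π g).2 (tau U π f).2) := by
  induction π with
  | o => exact Three.prec_iff_tauo f g
  | arrI π ih => simp only [prec3, tau, le2, ih, forall_and]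
  | arrP ρ π _ ih => simp only [prec3, tau, le2, ih, forall_and]

theorem stmt8 (U : Type) (hU : Nonempty U) (π : PTy) (f g : sem3 U π) :
    prec3 U π f g ↔
      (le2 U π (tau U π f).1 (tau U π g).1 ∧ le2 U π (tau U π g).2 (tau U π f).2) :=
  stmt8_general U π f g
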